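/- Let f : ℂ → ℂ be an entire function belonging to the class A_{2,0}, i.e., for every ε > 0 there exists A_ε > 0 such that |f(z)| ≤ A_ε·exp(ε|z|²) for all z ∈ ℂ. Then for every λ ∈ ℂ the series g(z) = Σ_{l=0}^{∞} (λ^l/l!)·f^{(2l)}(z) (where f^{(2l)} is the 2l-th complex derivative of f) converges uniformly on every compact subset of ℂ, its sum g is an entire function, and g again belongs to A_{2,0}: for every ε > 0 there exists B_ε > 0 such that |g(z)| ≤ B_ε·exp(ε|z|²) for all z ∈ ℂ. -/

import Mathlib

/-!
Cauchy's estimate on the circle of radius `r` about `z` with `2εr² = l + 1`, together with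
`(2l)! ≤ (2l + 2)^l l!`, gives `‖f^{(2l)}(z)‖ ≤ l! (4eε)^l · A_ε e · exp (2ε‖z‖²)`. So the `l`-th
term of the series is at most `A_ε e · exp (2ε‖z‖²) · (4eε‖λ‖)^l`, which for `ε` small is a
geometric bound with ratio `1/2`, uniform on compact sets. This gives locally uniform convergence,
hence an entire sum, and summing the geometric bound gives `g ∈ A_{2,0}` since `ε` is arbitrary.
-/

open Real Filter Metric
open scoped Nat

theorem Nat.factorial_two_mul_le_two_mul_succ_pow (n : ℕ) : (2 * n)! ≤ (2 * (n + 1)) ^ n * n ! :=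
  (Nat.factorial_two_mul_le n).trans <| Nat.mul_le_mul_right _ <| Nat.pow_le_pow_left (by omega) n

theorem norm_iteratedDeriv_two_mul_le_of_norm_le_mul_exp_sq {E : Type*} [NormedAddCommGroup E]
    [NormedSpace ℂ E] [CompleteSpace E] {f : ℂ → E} (hf : Differentiable ℂ f)
    {ε A : ℝ} (hε : 0 < ε) (hfA : ∀ z, ‖f z‖ ≤ A * exp (ε * ‖z‖ ^ 2)) (l : ℕ) (z : ℂ) :
    ‖iteratedDeriv (2 * l) f z‖ ≤ l ! * (4 * exp 1 * ε) ^ l * (A * exp 1 * exp (2 * ε * ‖z‖ ^ 2)) := by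
  have hA : 0 ≤ A := by simpa using (norm_nonneg _).trans (hfA 0)
  set r := √((l + 1) / (2 * ε))
  have hr : 0 < r := sqrt_pos.mpr (by positivity)
  have hr2 : 2 * ε * r ^ 2 = l + 1 := by
    rw [sq_sqrt (by positivity)]; field_simp
  set M := A * exp (2 * ε * ‖z‖ ^ 2 + (l + 1))
  have hsphere : ∀ w ∈ sphere z r, ‖f w‖ ≤ M := by
    intro w hw
    have hw' : ‖w‖ ≤ ‖z‖ + r := by
      simpa [← mem_sphere_iff_norm.mp hw] using norm_le_norm_add_norm_sub' w z
    refine (hfA w).trans (mul_le_mul_of_nonneg_left (exp_le_exp.mpr ?_) hA)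
    nlinarith [sq_nonneg (‖z‖ - r), norm_nonneg w, pow_le_pow_left₀ (norm_nonneg w) hw' 2]
  have hcauchy := Complex.norm_iteratedDeriv_le_of_forall_mem_sphere_norm_le (2 * l) hr
    hf.diffContOnCl hsphere
  have hfac : ((2 * l)! : ℝ) ≤ (2 * (l + 1)) ^ l * l ! := by
    exact_mod_cast Nat.factorial_two_mul_le_two_mul_succ_pow l
  have hrpow : r ^ (2 * l) * (4 * ε) ^ l = (2 * (l + 1)) ^ l := by
    rw [pow_mul, ← mul_pow, ← hr2]; ring
  have hM : M = A * exp 1 * exp (2 * ε * ‖z‖ ^ 2) * exp 1 ^ l := by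
    simp only [M, exp_add, ← exp_nat_mul]; ring_nf
  refine hcauchy.trans ?_
  rw [div_le_iff₀ (by positivity)]
  calc ((2 * l)! : ℝ) * M ≤ (2 * (l + 1)) ^ l * l ! * M := by gcongr
    _ = _ := by rw [← hrpow, hM, mul_pow, mul_pow]; ring

theorem exists_norm_mul_iteratedDeriv_two_mul_le_geometric {f : ℂ → ℂ} (hf : Differentiable ℂ f)
    (hgrowth : ∀ ε : ℝ, 0 < ε → ∃ A : ℝ, 0 < A ∧ ∀ z : ℂ, ‖f z‖ ≤ A * exp (ε * ‖z‖ ^ 2))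
    (lam : ℂ) (δ : ℝ) (hδ : 0 < δ) :
    ∃ C : ℝ, 0 < C ∧ ∀ (l : ℕ) (z : ℂ),
      ‖lam ^ l / (l ! : ℂ) * iteratedDeriv (2 * l) f z‖ ≤ C * exp (δ * ‖z‖ ^ 2) * (1 / 2) ^ l := by
  set ε := min (δ / 2) (1 / (8 * exp 1 * (‖lam‖ + 1)))
  have hε : 0 < ε := lt_min (by linarith) (by positivity)
  have hεδ : 2 * ε ≤ δ := by linarith [min_le_left (δ / 2) (1 / (8 * exp 1 * (‖lam‖ + 1)))]
  have hratio : 4 * exp 1 * ε * ‖lam‖ ≤ 1 / 2 := by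
    have := (le_div_iff₀ (by positivity)).mp (min_le_right (δ / 2) (1 / (8 * exp 1 * (‖lam‖ + 1))))
    nlinarith [mul_pos hε (exp_pos 1)]
  obtain ⟨A, hA, hfA⟩ := hgrowth ε hε
  refine ⟨A * exp 1, by positivity, fun l z => ?_⟩
  have hderiv := norm_iteratedDeriv_two_mul_le_of_norm_le_mul_exp_sq hf hε hfA l z
  rw [norm_mul, norm_div, norm_pow, Complex.norm_natCast]
  calc ‖lam‖ ^ l / l ! * ‖iteratedDeriv (2 * l) f z‖
      ≤ ‖lam‖ ^ l / l ! * (l ! * (4 * exp 1 * ε) ^ l * (A * exp 1 * exp (2 * ε * ‖z‖ ^ 2))) := by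
        gcongr
    _ = A * exp 1 * exp (2 * ε * ‖z‖ ^ 2) * (4 * exp 1 * ε * ‖lam‖) ^ l := by
        field_simp; ring
    _ ≤ A * exp 1 * exp (δ * ‖z‖ ^ 2) * (1 / 2) ^ l := by
        gcongr

theorem tendstoUniformlyOn_tsum_nat_of_norm_le_mul {α F : Type*} [TopologicalSpace α]
    [NormedAddCommGroup F] [CompleteSpace F] {f : ℕ → α → F} {w : α → ℝ} {u : ℕ → ℝ} {K : Set α}
    (hK : IsCompact K) (hw : ContinuousOn w K) (hu : Summable u) (hu0 : ∀ n, 0 ≤ u n)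
    (hfu : ∀ n x, ‖f n x‖ ≤ w x * u n) :
    TendstoUniformlyOn (fun N x => ∑ n ∈ Finset.range N, f n x) (fun x => ∑' n, f n x) atTop K := by
  obtain ⟨W, hW⟩ := hK.exists_bound_of_continuousOn hw
  refine tendstoUniformlyOn_tsum_nat (hu.mul_left W) fun n x hx => (hfu n x).trans ?_
  exact mul_le_mul_of_nonneg_right ((le_abs_self _).trans (hW x hx)) (hu0 n)

theorem Differentiable.of_tendstoUniformlyOn_isCompact {E ι : Type*} [NormedAddCommGroup E]
    [NormedSpace ℂ E] [CompleteSpace E] {p : Filter ι} [p.NeBot] {F : ι → ℂ → E} {g : ℂ → E} (hF : ∀ i, Differentiable ℂ (F i))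
    (hFg : ∀ K, IsCompact K → TendstoUniformlyOn F g p K) : Differentiable ℂ g := by
  have hloc : TendstoLocallyUniformlyOn F g p Set.univ :=
    (tendstoLocallyUniformlyOn_iff_forall_isCompact isOpen_univ).mpr fun K _ hK => hFg K hK
  exact differentiableOn_univ.mp <|
    hloc.differentiableOn (.of_forall fun i => (hF i).differentiableOn) isOpen_univ

theorem convolution_operator_preserves_A20
    (f : ℂ → ℂ) (hf : Differentiable ℂ f)
    (hgrowth : ∀ ε : ℝ, 0 < ε → ∃ A : ℝ, 0 < A ∧
      ∀ z : ℂ, ‖f z‖ ≤ A * Real.exp (ε * ‖z‖ ^ 2))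
    (lam : ℂ) :
    ∃ g : ℂ → ℂ,
      (∀ z : ℂ, HasSum (fun l : ℕ =>
        lam ^ l / (l.factorial : ℂ) * iteratedDeriv (2 * l) f z) (g z))
      ∧ (∀ K : Set ℂ, IsCompact K →
          TendstoUniformlyOn
            (fun (N : ℕ) (z : ℂ) => ∑ l ∈ Finset.range N,
              lam ^ l / (l.factorial : ℂ) * iteratedDeriv (2 * l) f z)
            g Filter.atTop K)
      ∧ Differentiable ℂ g
      ∧ ∀ ε : ℝ, 0 < ε → ∃ B : ℝ, 0 < B ∧
          ∀ z : ℂ, ‖g z‖ ≤ B * Real.exp (ε * ‖z‖ ^ 2) := by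
  have hdom := exists_norm_mul_iteratedDeriv_two_mul_le_geometric hf hgrowth lam
  obtain ⟨C, -, hC⟩ := hdom 1 one_pos
  have hunif : ∀ K : Set ℂ, IsCompact K → TendstoUniformlyOn
      (fun (N : ℕ) (z : ℂ) => ∑ l ∈ Finset.range N,
        lam ^ l / (l.factorial : ℂ) * iteratedDeriv (2 * l) f z)
      (fun z => ∑' l : ℕ, lam ^ l / (l.factorial : ℂ) * iteratedDeriv (2 * l) f z) atTop K :=
    fun K hK => tendstoUniformlyOn_tsum_nat_of_norm_le_mul hK (by fun_prop) summable_geometric_two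
      (fun l => by positivity) hC
  refine ⟨_, fun z => ?_, hunif, ?_, fun ε hε => ?_⟩
  · exact (summable_geometric_two.mul_left _ |>.of_norm_bounded (hC · z)).hasSum
  · refine .of_tendstoUniformlyOn_isCompact (fun N => ?_) hunif
    exact .fun_sum fun l _ => (hf.contDiff.differentiable_iteratedDeriv (n := ⊤) _
      (WithTop.coe_lt_top _)).const_mul _
  · obtain ⟨B, hB, hB'⟩ := hdom ε hε
    refine ⟨B * 2, by positivity, fun z => ?_⟩
    exact (tsum_of_norm_bounded (hasSum_geometric_two.mul_left _) (hB' · z)).trans_eq (by ring)
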